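/- Let X be a k-dimensional simplicial complex on a finite vertex set V, let V = A_0 ⊔ … ⊔ A_k be a partition into nonempty parts, and let f ∈ C^{k−1}(X;ℝ) be the associated cochain (with the partition-adapted linear order on V). Let τ = {v_0 < v_1 < … < v_k} ∈ F^∂(A_0,…,A_k) and set d_j = d(τ∖{v_j}) for j = 0,…,k. Then for every g ∈ C^{k−2}(X;ℝ): q(τ,g) = Σ_{j=0}^{k} (1/d_j)·(f(τ∖{v_j}) − (δ_{k−2}g)(τ∖{v_j}))² ≥ |V|²/(Σ_{j=0}^{k} d_j). -/

import Mathlib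

open Finset

namespace HigherCheeger

variable {V : Type*} [DecidableEq V] [Fintype V] [LinearOrder V]

/-- An abstract simplicial complex: a family of finite subsets of `V`
closed under taking subsets. -/
def IsComplex (X : Finset (Finset V)) : Prop :=
  ∀ σ ∈ X, ∀ τ ⊆ σ, τ ∈ X

/-- `X` is `k`-dimensional: every face has at most `k+1` vertices
and some face has exactly `k+1` vertices. -/
def IsDim (X : Finset (Finset V)) (k : ℕ) : Prop :=
  (∀ σ ∈ X, σ.card ≤ k + 1) ∧ ∃ σ ∈ X, σ.card = k + 1

/-- The faces of `X` of cardinality `c` (i.e. of dimension `c - 1`). -/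
def faces (X : Finset (Finset V)) (c : ℕ) : Finset (Finset V) :=
  X.filter fun σ => σ.card = c

/-- `X` has complete `(k-1)`-skeleton: every subset of `V` of size at most `k` is a face. -/
def CompleteSkeleton (X : Finset (Finset V)) (k : ℕ) : Prop :=
  ∀ σ : Finset V, σ.card ≤ k → σ ∈ X

/-- The `k`-dimensional completion `K(X)`. -/
def completion (X : Finset (Finset V)) (k : ℕ) : Finset (Finset V) :=
  X ∪ (Finset.univ.filter fun τ : Finset V => τ.card = k + 1 ∧ ∀ v ∈ τ, τ.erase v ∈ X)

/-- The complete `k`-dimensional complex `K_n^k` on the vertex set `V`. -/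
def completeComplex (V : Type*) [DecidableEq V] [Fintype V] (k : ℕ) : Finset (Finset V) :=
  Finset.univ.filter fun σ : Finset V => σ.card ≤ k + 1

/-- The oriented incidence number `[τ:σ]` (with respect to the linear order on `V`):
`(-1)^j` if `σ = τ \ {v_j}` where `v_j` is the `j`-th smallest vertex of `τ`, and `0` otherwise. -/
def incidence (τ σ : Finset V) : ℝ :=
  if σ ⊆ τ ∧ σ.card + 1 = τ.card then
    ∑ v ∈ τ \ σ, (-1 : ℝ) ^ (τ.filter fun w => w < v).card
  else 0

/-- The real coboundary operator `δ` applied to a cochain living on the faces of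
cardinality `c`; the result lives on faces of cardinality `c + 1`. -/
def delta (X : Finset (Finset V)) (c : ℕ) (f : Finset V → ℝ) : Finset V → ℝ :=
  fun τ => ∑ σ ∈ faces X c, incidence τ σ * f σ

/-- The real boundary operator `∂` (the adjoint of `δ`) applied to a cochain living
on the faces of cardinality `c`; the result lives on faces of cardinality `c - 1`. -/
def bdry (X : Finset (Finset V)) (c : ℕ) (f : Finset V → ℝ) : Finset V → ℝ :=
  fun σ => ∑ τ ∈ faces X c, incidence τ σ * f τ

/-- The inner product of two cochains on the faces of cardinality `c`. -/
def inn (X : Finset (Finset V)) (c : ℕ) (f g : Finset V → ℝ) : ℝ :=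
  ∑ σ ∈ faces X c, f σ * g σ

/-- The upper Laplacian `L^up_{k-1} = ∂_k δ_{k-1}` acting on `(k-1)`-cochains
(functions on faces of cardinality `k`). -/
def lapUp (X : Finset (Finset V)) (k : ℕ) (f : Finset V → ℝ) : Finset V → ℝ :=
  bdry X (k + 1) (delta X k f)

/-- The lower Laplacian `L^down_{k-1} = δ_{k-2} ∂_{k-1}` acting on `(k-1)`-cochains. -/
def lapDown (X : Finset (Finset V)) (k : ℕ) (f : Finset V → ℝ) : Finset V → ℝ :=
  delta X (k - 1) (bdry X k f)

/-- `f ∈ Z_{k-1}(X;ℝ) = ker ∂_{k-1}`. -/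
def IsCycle (X : Finset (Finset V)) (k : ℕ) (f : Finset V → ℝ) : Prop :=
  ∀ σ : Finset V, bdry X k f σ = 0

/-- `f ∈ B^{k-1}(X;ℝ) = im δ_{k-2}` (as a cochain, i.e. on the `(k-1)`-faces). -/
def IsCobdry (X : Finset (Finset V)) (k : ℕ) (f : Finset V → ℝ) : Prop :=
  ∃ g : Finset V → ℝ, ∀ σ ∈ faces X k, f σ = delta X (k - 1) g σ

/-- The spectral gap `λ(X)`: the minimum of the Rayleigh quotient
`⟨L^up_{k-1}(X) f, f⟩ / ⟨f, f⟩` over nonzero `f ∈ Z_{k-1}(X;ℝ)`. -/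
noncomputable def spectralGap (X : Finset (Finset V)) (k : ℕ) : ℝ :=
  sInf {r : ℝ | ∃ f : Finset V → ℝ, IsCycle X k f ∧ inn X k f f ≠ 0 ∧
    r = inn X k (lapUp X k f) f / inn X k f f}

/-- A partition of `V` into `m` (nonempty) parts. -/
def IsPartition {m : ℕ} (A : Fin m → Finset V) : Prop :=
  (∀ i, (A i).Nonempty) ∧ ∀ v : V, ∃! i, v ∈ A i

/-- The linear order on `V` is adapted to the family of parts `A`. -/
def OrderAdapted {m : ℕ} (A : Fin m → Finset V) : Prop :=
  ∀ i j : Fin m, i < j → ∀ v ∈ A i, ∀ w ∈ A j, v < w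

/-- `F(A_0,…,A_k)`: the `k`-faces of `X` with exactly one vertex in each part. -/
def Fset (X : Finset (Finset V)) (k : ℕ) (A : Fin (k + 1) → Finset V) : Finset (Finset V) :=
  (faces X (k + 1)).filter fun τ => ∀ i, (τ ∩ A i).card = 1

/-- `F^∂(A_0,…,A_k)`: the `(k+1)`-element members of `K(X)` with exactly one vertex
in each part. -/
def Fpar (X : Finset (Finset V)) (k : ℕ) (A : Fin (k + 1) → Finset V) : Finset (Finset V) :=
  (faces (completion X k) (k + 1)).filter fun τ => ∀ i, (τ ∩ A i).card = 1

/-- The value `|V|·|F(A_0,…,A_k)| / |F^∂(A_0,…,A_k)|` of a partition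
(`⊤` if the denominator is `0`). -/
noncomputable def cheegerVal (X : Finset (Finset V)) (k : ℕ) (A : Fin (k + 1) → Finset V) :
    EReal :=
  if (Fpar X k A).card = 0 then ⊤
  else (((Fintype.card V * (Fset X k A).card : ℝ) / ((Fpar X k A).card : ℝ) : ℝ) : EReal)

/-- The Cheeger constant `h(X)`. -/
noncomputable def cheeger (X : Finset (Finset V)) (k : ℕ) : EReal :=
  sInf {r : EReal | ∃ A : Fin (k + 1) → Finset V, IsPartition A ∧ r = cheegerVal X k A}

/-- `d(σ)`: the number of members of `F^∂(A_0,…,A_k)` containing `σ`. -/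
def degPar (X : Finset (Finset V)) (k : ℕ) (A : Fin (k + 1) → Finset V) (σ : Finset V) : ℕ :=
  ((Fpar X k A).filter fun τ => σ ⊆ τ).card

/-- `C(X)` (with respect to the partition `A`):
the maximum over `τ ∈ F^∂(A_0,…,A_k)` of `∑_{v ∈ τ} d(τ \ {v})`. -/
def Cconst (X : Finset (Finset V)) (k : ℕ) (A : Fin (k + 1) → Finset V) : ℕ :=
  (Fpar X k A).sup fun τ => ∑ v ∈ τ, degPar X k A (τ.erase v)

/-- The cochain associated to a partition `A`: `σ ↦ (-1)^l·|A_l|` if `A_l` is the unique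
part disjoint from `σ`, and `0` otherwise. -/
def assocCochain {k : ℕ} (A : Fin (k + 1) → Finset V) (σ : Finset V) : ℝ :=
  if (Finset.univ.filter fun l => σ ∩ A l = ∅).card = 1 then
    ∑ l ∈ Finset.univ.filter fun l => σ ∩ A l = ∅, (-1 : ℝ) ^ (l : ℕ) * ((A l).card : ℝ)
  else 0

/-- The `Z₂`-coboundary: a `(c-1)`-cochain `f` is sent to
`τ ↦ ∑_{v ∈ τ} f (τ \ {v})`. -/
def deltaZ2 (f : Finset V → ZMod 2) (τ : Finset V) : ZMod 2 :=
  ∑ v ∈ τ, f (τ.erase v)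

/-- The support of the `Z₂`-coboundary of `f` in `X`: the faces of `X` of cardinality
`k + 1` on which the `Z₂`-coboundary of `f` is nonzero.  Its cardinality is `|δ_X f|`. -/
def suppDelta (X : Finset (Finset V)) (k : ℕ) (f : Finset V → ZMod 2) : Finset (Finset V) :=
  (faces X (k + 1)).filter fun τ => deltaZ2 f τ ≠ 0

/-- `F(A_0,…,A_{k-1})`: the `(k-1)`-faces of `X` with exactly one vertex in each of
the `k` parts. -/
def FsetLow (X : Finset (Finset V)) (k : ℕ) (A : Fin k → Finset V) : Finset (Finset V) :=
  (faces X k).filter fun σ => ∀ i, (σ ∩ A i).card = 1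

/-- The Cheeger-type constant `h'(X)`. -/
noncomputable def cheeger' (X : Finset (Finset V)) (k : ℕ) : EReal :=
  sInf {r : EReal | ∃ (A : Fin k → Finset V) (f : Finset V → ZMod 2),
    IsPartition A ∧ (∀ σ, f σ ≠ 0 → σ ∈ FsetLow X k A) ∧
    r = if (suppDelta (completion X k) k f).card = 0 then (⊤ : EReal)
        else (((Fintype.card V * (suppDelta X k f).card : ℝ) /
              ((suppDelta (completion X k) k f).card : ℝ) : ℝ) : EReal)}

/-- The Hamming norm of a `Z₂`-cochain on the faces of cardinality `c`. -/
def hamming (X : Finset (Finset V)) (c : ℕ) (f : Finset V → ZMod 2) : ℕ :=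
  ((faces X c).filter fun σ => f σ ≠ 0).card

/-- `|[f]|`: the minimum Hamming norm of `f + δ_X g` over `g ∈ C^{k-2}(X;Z₂)`. -/
noncomputable def normClass (X : Finset (Finset V)) (k : ℕ) (f : Finset V → ZMod 2) : ℕ :=
  sInf {m : ℕ | ∃ g : Finset V → ZMod 2, m = hamming X k fun σ => f σ + deltaZ2 g σ}

/-- The coboundary expansion `φ(X) = min_f |δ_X f| / |[f]|` (quotients with denominator
`0` are `∞`). -/
noncomputable def phi (X : Finset (Finset V)) (k : ℕ) : EReal :=
  sInf {r : EReal | ∃ f : Finset V → ZMod 2,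
    r = if normClass X k f = 0 then (⊤ : EReal)
        else ((((suppDelta X k f).card : ℝ) / (normClass X k f : ℝ) : ℝ) : EReal)}

/-- `h̃(X) = min_f |V|·|δ_X f| / |δ_{K(X)} f|` (quotients with denominator `0` are `∞`). -/
noncomputable def htilde (X : Finset (Finset V)) (k : ℕ) : EReal :=
  sInf {r : EReal | ∃ f : Finset V → ZMod 2,
    r = if (suppDelta (completion X k) k f).card = 0 then (⊤ : EReal)
        else (((Fintype.card V * (suppDelta X k f).card : ℝ) /
              ((suppDelta (completion X k) k f).card : ℝ) : ℝ) : EReal)}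

/-!
Put `F v = [τ : τ \ v] · (f - δg)(τ \ v)`. Since `δδ = 0`, the `δg`-part of `∑ v, F v`
vanishes. As the order is adapted to the partition, the vertex of `τ` in `A i` is the
`i`-th smallest, so `[τ : τ \ v] = (-1)^i` cancels the sign of `f (τ \ v) = (-1)^i |A i|`,
and `∑ v, F v = |V|`. Since `[τ : τ \ v]² = 1`, the claim is the Sedrakyan (Engel) form of
Cauchy–Schwarz: `(∑ F)² / ∑ d ≤ ∑ F² / d`.
-/

lemma eq_erase_erase_of_sdiff_eq_pair {V : Type*} [DecidableEq V] {τ σ : Finset V} {x y : V}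
    (hσ : σ ⊆ τ) (h : τ \ σ = {x, y}) : σ = (τ.erase x).erase y := by
  rw [← Finset.sdiff_sdiff_eq_self hσ, h]
  ext w
  simp only [mem_sdiff, mem_insert, mem_singleton, mem_erase]
  tauto

section Partition

variable {V : Type*} {m : ℕ} {A : Fin m → Finset V}

lemma IsPartition.eq_of_mem (hA : IsPartition A) {v : V} {i j : Fin m} (hi : v ∈ A i)
    (hj : v ∈ A j) : i = j :=
  (hA.2 v).unique hi hj

lemma IsPartition.sum_sum_inter [DecidableEq V] {M : Type*} [AddCommMonoid M]
    (hA : IsPartition A) (s : Finset V) (F : V → M) :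
    ∑ i, ∑ v ∈ s ∩ A i, F v = ∑ v ∈ s, F v := by
  simp only [← filter_mem_eq_inter, sum_filter]
  rw [sum_comm]
  refine sum_congr rfl fun v _ => ?_
  obtain ⟨i, hi, -⟩ := hA.2 v
  rw [sum_eq_single_of_mem i (mem_univ i) fun j _ hji =>
    if_neg fun hj => hji (hA.eq_of_mem hj hi), if_pos hi]

lemma IsPartition.sum_card_inter [DecidableEq V] (hA : IsPartition A) (s : Finset V) :
    ∑ i, #(s ∩ A i) = #s := by
  simpa only [card_eq_sum_ones] using hA.sum_sum_inter s fun _ => 1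

lemma IsPartition.sum_card [DecidableEq V] [Fintype V] (hA : IsPartition A) :
    ∑ i, #(A i) = Fintype.card V := by
  simpa only [univ_inter, card_univ] using hA.sum_card_inter univ

end Partition

section Transversal

variable {V : Type*} [DecidableEq V] {m : ℕ} {A : Fin m → Finset V} {τ : Finset V}
  {v : V} {i : Fin m}

lemma inter_eq_singleton_of_card_eq_one (hτ : #(τ ∩ A i) = 1) (hv : v ∈ τ)
    (hvi : v ∈ A i) : τ ∩ A i = {v} := by
  obtain ⟨u, hu⟩ := card_eq_one.mp hτ
  have hvu : v ∈ ({u} : Finset V) := hu ▸ mem_inter.mpr ⟨hv, hvi⟩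
  rwa [mem_singleton.mp hvu]

lemma card_filter_lt_of_mem [LinearOrder V] (hA : IsPartition A) (hord : OrderAdapted A)
    (hτ : ∀ j, #(τ ∩ A j) = 1) (hv : v ∈ τ) (hvi : v ∈ A i) :
    #{w ∈ τ | w < v} = i := by
  have hpart : ∀ j, #({w ∈ τ | w < v} ∩ A j) = if j < i then 1 else 0 := by
    intro j
    split_ifs with hji
    · rw [← hτ j]
      congr 1
      ext w
      simp only [mem_inter, mem_filter]
      exact ⟨fun h => ⟨h.1.1, h.2⟩, fun h => ⟨⟨h.1, hord j i hji w h.2 v hvi⟩, h.2⟩⟩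
    · refine card_eq_zero.mpr (eq_empty_of_forall_notMem fun w hw => ?_)
      obtain ⟨⟨hwτ, hwv⟩, hwj⟩ := by simpa only [mem_inter, mem_filter] using hw
      rcases (not_lt.mp hji).eq_or_lt with hij | hij
      · have hw : w ∈ τ ∩ A i := mem_inter.mpr ⟨hwτ, hij ▸ hwj⟩
        rw [inter_eq_singleton_of_card_eq_one (hτ i) hv hvi, mem_singleton] at hw
        exact (hw ▸ hwv).false
      · exact (hord i j hij v hvi w hwj).not_gt hwv
  rw [← hA.sum_card_inter, sum_congr rfl fun j _ => hpart j, sum_boole, Nat.cast_id,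
    filter_gt_eq_Iio, Fin.card_Iio]

lemma erase_inter_eq_empty_iff (hA : IsPartition A) (hτ : ∀ j, #(τ ∩ A j) = 1) (hv : v ∈ τ)
    (hvi : v ∈ A i) {l : Fin m} : τ.erase v ∩ A l = ∅ ↔ l = i := by
  rw [erase_inter]
  constructor
  · intro h
    obtain ⟨u, hu⟩ := card_eq_one.mp (hτ l)
    have hu' : u ∈ τ ∩ A l := hu ▸ mem_singleton_self u
    by_cases huv : u = v
    · exact hA.eq_of_mem (huv ▸ (mem_inter.mp hu').2) hvi
    · exact absurd (h ▸ mem_erase.mpr ⟨huv, hu'⟩ : u ∈ (∅ : Finset V)) (notMem_empty u)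
  · rintro rfl
    rw [inter_eq_singleton_of_card_eq_one (hτ l) hv hvi, erase_singleton]

end Transversal

section Incidence

variable {V : Type*} [DecidableEq V] [LinearOrder V]

lemma incidence_erase {τ : Finset V} {v : V} (hv : v ∈ τ) :
    incidence τ (τ.erase v) = (-1 : ℝ) ^ #{w ∈ τ | w < v} := by
  rw [incidence, if_pos ⟨erase_subset v τ, card_erase_add_one hv⟩, sdiff_erase_self hv,
    sum_singleton]

lemma incidence_erase_sq {τ : Finset V} {v : V} (hv : v ∈ τ) :
    incidence τ (τ.erase v) ^ 2 = 1 := by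
  rw [incidence_erase hv, ← pow_mul, pow_mul', neg_one_sq, one_pow]

lemma incidence_eq_zero_of_not_subset {τ σ : Finset V} (h : ¬σ ⊆ τ) : incidence τ σ = 0 :=
  if_neg fun h' => h h'.1

lemma incidence_eq_zero_of_card_ne {τ σ : Finset V} (h : σ.card + 1 ≠ τ.card) :
    incidence τ σ = 0 :=
  if_neg fun h' => h h'.2

/-- The two orders of removing `x < y` from `τ` to reach `σ` carry opposite signs. -/
lemma incidence_mul_incidence_add_swap {τ σ : Finset V} {x y : V} (hσ : σ ⊆ τ)
    (h : τ \ σ = {x, y}) (hxy : x < y) :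
    incidence τ (τ.erase x) * incidence (τ.erase x) σ +
      incidence τ (τ.erase y) * incidence (τ.erase y) σ = 0 := by
  have hx : x ∈ τ := (mem_sdiff.mp (h ▸ mem_insert_self x {y})).1
  have hy : y ∈ τ := (mem_sdiff.mp (h ▸ mem_insert_of_mem (mem_singleton_self y))).1
  have hσx : incidence (τ.erase x) σ = (-1 : ℝ) ^ #{w ∈ τ.erase x | w < y} := by
    rw [eq_erase_erase_of_sdiff_eq_pair hσ h, incidence_erase (mem_erase.mpr ⟨hxy.ne', hy⟩)]
  have hσy : incidence (τ.erase y) σ = (-1 : ℝ) ^ #{w ∈ τ.erase y | w < x} := by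
    rw [eq_erase_erase_of_sdiff_eq_pair hσ (pair_comm x y ▸ h),
      incidence_erase (mem_erase.mpr ⟨hxy.ne, hx⟩)]
  have hx_lt_y : x ∈ {w ∈ τ | w < y} := mem_filter.mpr ⟨hx, hxy⟩
  have hy_not_lt_x : y ∉ {w ∈ τ | w < x} := fun h => (mem_filter.mp h).2.not_gt hxy
  obtain ⟨n, hn⟩ : ∃ n, #{w ∈ τ | w < y} = n + 1 :=
    Nat.exists_eq_add_one.mpr (card_pos.mpr ⟨x, hx_lt_y⟩)
  rw [hσx, hσy, incidence_erase hx, incidence_erase hy, filter_erase, filter_erase,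
    card_erase_of_mem hx_lt_y, erase_eq_of_notMem hy_not_lt_x, hn, Nat.add_sub_cancel, pow_succ]
  ring

lemma sum_incidence_erase_mul_incidence (τ σ : Finset V) :
    ∑ v ∈ τ, incidence τ (τ.erase v) * incidence (τ.erase v) σ = 0 := by
  by_cases hσ : σ ⊆ τ ∧ σ.card + 2 = τ.card
  · obtain ⟨hsub, hcard⟩ := hσ
    obtain ⟨x, y, hxy, hpair⟩ : ∃ x y, x ≠ y ∧ τ \ σ = {x, y} :=
      card_eq_two.mp (by rw [card_sdiff_of_subset hsub]; omega)
    rw [← sum_subset sdiff_subset fun v hvτ hv => ?_, hpair, sum_pair hxy]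
    · rcases hxy.lt_or_gt with hlt | hgt
      · exact incidence_mul_incidence_add_swap hsub hpair hlt
      · rw [add_comm]
        exact incidence_mul_incidence_add_swap hsub (pair_comm x y ▸ hpair) hgt
    · have hvσ : v ∈ σ := by_contra fun h => hv (mem_sdiff.mpr ⟨hvτ, h⟩)
      rw [incidence_eq_zero_of_not_subset fun h => (mem_erase.mp (h hvσ)).1 rfl, mul_zero]
  · refine sum_eq_zero fun v hv => ?_
    by_cases hsub : σ ⊆ τ.erase v
    · rw [incidence_eq_zero_of_card_ne (τ := τ.erase v), mul_zero]
      have := card_erase_add_one hv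
      exact fun h => hσ ⟨hsub.trans (erase_subset v τ), by omega⟩
    · rw [incidence_eq_zero_of_not_subset hsub, mul_zero]

lemma sum_incidence_erase_mul_delta (X : Finset (Finset V)) (c : ℕ) (g : Finset V → ℝ)
    (τ : Finset V) : ∑ v ∈ τ, incidence τ (τ.erase v) * delta X c g (τ.erase v) = 0 := by
  simp only [delta, mul_sum, ← mul_assoc]
  rw [sum_comm]
  exact sum_eq_zero fun σ _ => by rw [← sum_mul, sum_incidence_erase_mul_incidence, zero_mul]

end Incidence

section AssocCochain

variable {V : Type*} [DecidableEq V] {k : ℕ} {A : Fin (k + 1) → Finset V} {τ : Finset V}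

lemma assocCochain_erase (hA : IsPartition A) (hτ : ∀ j, #(τ ∩ A j) = 1) {v : V}
    {i : Fin (k + 1)} (hv : v ∈ τ) (hvi : v ∈ A i) :
    assocCochain A (τ.erase v) = (-1 : ℝ) ^ (i : ℕ) * #(A i) := by
  have hempty : ({l | τ.erase v ∩ A l = ∅} : Finset (Fin (k + 1))) = {i} := by
    ext l
    simp only [mem_filter, mem_univ, true_and, mem_singleton,
      erase_inter_eq_empty_iff hA hτ hv hvi]
  rw [assocCochain, hempty, if_pos (card_singleton i), sum_singleton]

lemma incidence_erase_mul_assocCochain_erase [LinearOrder V] (hA : IsPartition A)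
    (hord : OrderAdapted A) (hτ : ∀ j, #(τ ∩ A j) = 1) {v : V} {i : Fin (k + 1)}
    (hv : v ∈ τ) (hvi : v ∈ A i) :
    incidence τ (τ.erase v) * assocCochain A (τ.erase v) = #(A i) := by
  rw [incidence_erase hv, card_filter_lt_of_mem hA hord hτ hv hvi,
    assocCochain_erase hA hτ hv hvi, ← mul_assoc, ← mul_pow, neg_one_mul, neg_neg, one_pow,
    one_mul]

lemma sum_incidence_erase_mul_assocCochain_erase [LinearOrder V] [Fintype V]
    (hA : IsPartition A) (hord : OrderAdapted A) (hτ : ∀ j, #(τ ∩ A j) = 1) :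
    ∑ v ∈ τ, incidence τ (τ.erase v) * assocCochain A (τ.erase v) = Fintype.card V := by
  rw [← hA.sum_sum_inter τ, ← hA.sum_card, Nat.cast_sum]
  refine sum_congr rfl fun i _ => ?_
  obtain ⟨v, hv⟩ := card_eq_one.mp (hτ i)
  have hvi : v ∈ τ ∩ A i := hv ▸ mem_singleton_self v
  rw [hv, sum_singleton,
    incidence_erase_mul_assocCochain_erase hA hord hτ (mem_inter.mp hvi).1 (mem_inter.mp hvi).2]

end AssocCochain

theorem q_ge_card_sq_div_sum_deg_general
    {V : Type*} [DecidableEq V] [Fintype V] [LinearOrder V]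
    (X : Finset (Finset V)) (k : ℕ)
    (A : Fin (k + 1) → Finset V) (hA : IsPartition A) (hord : OrderAdapted A)
    (τ : Finset V) (hτ : τ ∈ Fpar X k A) (g : Finset V → ℝ) :
    (Fintype.card V : ℝ) ^ 2 / (∑ v ∈ τ, (degPar X k A (τ.erase v) : ℝ))
      ≤ ∑ v ∈ τ, (1 / (degPar X k A (τ.erase v) : ℝ)) *
          (assocCochain A (τ.erase v) - delta X (k - 1) g (τ.erase v)) ^ 2 := by
  have htrans : ∀ j, #(τ ∩ A j) = 1 := (mem_filter.mp hτ).2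
  have hdeg : ∀ v ∈ τ, 0 < (degPar X k A (τ.erase v) : ℝ) := fun v _ =>
    Nat.cast_pos.mpr (card_pos.mpr ⟨τ, mem_filter.mpr ⟨hτ, erase_subset v τ⟩⟩)
  set F : V → ℝ := fun v => incidence τ (τ.erase v) *
    (assocCochain A (τ.erase v) - delta X (k - 1) g (τ.erase v))
  have hsum : ∑ v ∈ τ, F v = Fintype.card V := by
    simp only [F, mul_sub, sum_sub_distrib, sum_incidence_erase_mul_delta, sub_zero,
      sum_incidence_erase_mul_assocCochain_erase hA hord htrans]
  calc (Fintype.card V : ℝ) ^ 2 / ∑ v ∈ τ, (degPar X k A (τ.erase v) : ℝ)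
      = (∑ v ∈ τ, F v) ^ 2 / ∑ v ∈ τ, (degPar X k A (τ.erase v) : ℝ) := by rw [hsum]
    _ ≤ ∑ v ∈ τ, F v ^ 2 / degPar X k A (τ.erase v) := sq_sum_div_le_sum_sq_div τ F hdeg
    _ = _ := sum_congr rfl fun v hv => by
      rw [mul_pow, incidence_erase_sq hv, one_mul, one_div_mul_eq_div]

/-- **Lemma 2.2 b).**  Let `X` be a `k`-dimensional complex, `A` a partition of `V` into
`k+1` nonempty parts and `f` the associated cochain (w.r.t. a partition-adapted order).
For `τ = {v_0 < … < v_k} ∈ F^∂(A_0,…,A_k)`, `d_j = d(τ \ {v_j})` and any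
`g ∈ C^{k-2}(X;ℝ)`:
`q(τ,g) = ∑_j (1/d_j)·(f(τ\{v_j}) - (δ_{k-2}g)(τ\{v_j}))² ≥ |V|²/(∑_j d_j)`. -/
theorem q_ge_card_sq_div_sum_deg
    {V : Type*} [DecidableEq V] [Fintype V] [LinearOrder V]
    (X : Finset (Finset V)) (k : ℕ)
    (hX : IsComplex X) (hdim : IsDim X k)
    (A : Fin (k + 1) → Finset V) (hA : IsPartition A) (hord : OrderAdapted A)
    (τ : Finset V) (hτ : τ ∈ Fpar X k A) (g : Finset V → ℝ) :
    (Fintype.card V : ℝ) ^ 2 / (∑ v ∈ τ, (degPar X k A (τ.erase v) : ℝ))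
      ≤ ∑ v ∈ τ, (1 / (degPar X k A (τ.erase v) : ℝ)) *
          (assocCochain A (τ.erase v) - delta X (k - 1) g (τ.erase v)) ^ 2 :=
  q_ge_card_sq_div_sum_deg_general X k A hA hord τ hτ g

end HigherCheeger
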